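/- Let X and Y be metric spaces, E and F nontrivial normed spaces, A(X,E) = C(X,E) or C_*(X,E), and A(Y,F) = C(Y,F) or C_*(Y,F). Let T: A(X,E) → A(Y,F) be a biseparating map, and suppose φ: X → Y is a homeomorphism and Φ: Y × E → F is a function such that Tf(y) = Φ(y, f(φ⁻¹(y))) for all f ∈ A(X,E) and all y ∈ Y. Then for every compact set K ⊆ Y', every f ∈ A(X,E) and every ε > 0, there exists δ > 0 such that for every g ∈ A(X,E) with ‖g − f‖_{φ⁻¹(K)} < δ one has ‖Tg − Tf‖_K < ε. -/

import Mathlib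

/-!
If the claim fails for some `ε`, there are `g n` with `‖g n - f‖ < 1 / (n + 1)` on `φ⁻¹ K` and points
`y n ∈ K` at which `T (g n)` and `T f` differ by more than `ε / 2`. As `T` acts pointwise,
`T (g n) (y n) = T (f + c n) (y n)` for the constants `c n = g n (φ⁻¹ (y n)) - f (φ⁻¹ (y n)) → 0`, so after
passing to `y n → y₀ ∈ K` it suffices that `Φ (y n, f (φ⁻¹ (y n)) + c n) → T f y₀`.

For points approaching `x₀ = φ⁻¹ y₀` from outside `{x₀}`, a lacunary subsequence lets all the `c n` be
glued into one bounded continuous `u` with `u x₀ = 0`, and the limit is the continuity of `T (f + u)`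
at `y₀`. An arbitrary sequence is moved off `x₀`, using that `y₀` is an accumulation point and that
each `T (f + c n)` is continuous.
-/

open Topology Filter Set ENNReal

namespace Stmt10

/-- The space of continuous functions, as a set of functions. -/
def Cset (X E : Type*) [TopologicalSpace X] [TopologicalSpace E] : Set (X → E) :=
  {f | Continuous f}

/-- The space of bounded continuous functions, as a set of functions. -/
def CbSet (X E : Type*) [TopologicalSpace X] [PseudoMetricSpace E] : Set (X → E) :=
  {f | Continuous f ∧ Bornology.IsBounded (Set.range f)}

/-- The set of accumulation points of a topological space. -/
def accPts (X : Type*) [TopologicalSpace X] : Set X := {x | 𝓝[≠] x ≠ ⊥}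

/-- `T` is biseparating: a bijection such that `f, g` are disjoint with respect to `h`
iff `Tf, Tg` are disjoint with respect to `Th`. -/
def Biseparating {X Y E F : Type*} {A : Set (X → E)} {B : Set (Y → F)} (T : A → B) : Prop :=
  Function.Bijective T ∧ ∀ f g h : A,
    ({x | (f : X → E) x ≠ (h : X → E) x} ∩ {x | (g : X → E) x ≠ (h : X → E) x} = ∅ ↔
      {y | (T f : Y → F) y ≠ (T h : Y → F) y} ∩ {y | (T g : Y → F) y ≠ (T h : Y → F) y} = ∅)

open scoped NNReal BoundedContinuousFunction

lemma continuous_of_mem {X E : Type*} [TopologicalSpace X] [PseudoMetricSpace E]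
    {A : Set (X → E)} (hA : A = Cset X E ∨ A = CbSet X E) {f : X → E} (hf : f ∈ A) :
    Continuous f := by
  rcases hA with rfl | rfl
  exacts [hf, hf.1]

lemma add_boundedContinuous_mem {X E : Type*} [TopologicalSpace X] [SeminormedAddCommGroup E]
    {A : Set (X → E)} (hA : A = Cset X E ∨ A = CbSet X E) {f : X → E} (hf : f ∈ A)
    (u : X →ᵇ E) : f + ⇑u ∈ A := by
  rcases hA with rfl | rfl
  · exact hf.add u.continuous
  · refine ⟨hf.1.add u.continuous, ?_⟩
    obtain ⟨C, hC⟩ := isBounded_iff_forall_norm_le.mp hf.2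
    refine isBounded_iff_forall_norm_le.mpr ⟨C + ‖u‖, ?_⟩
    rintro _ ⟨x, rfl⟩
    exact (norm_add_le _ _).trans (add_le_add (hC _ ⟨x, rfl⟩) (u.norm_coe_le_norm x))

lemma norm_lt_of_iSup₂_nnnorm_lt_ofReal {Y E : Type*} [SeminormedAddCommGroup E]
    {K : Set Y} {u : Y → E} {δ : ℝ} (h : ⨆ y ∈ K, (‖u y‖₊ : ℝ≥0∞) < ENNReal.ofReal δ)
    {y : Y} (hy : y ∈ K) : ‖u y‖ < δ := by
  have := (le_iSup₂ (f := fun y (_ : y ∈ K) => (‖u y‖₊ : ℝ≥0∞)) y hy).trans_lt h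
  rw [← enorm_eq_nnnorm, ← ofReal_norm] at this
  exact (ENNReal.ofReal_lt_ofReal_iff_of_nonneg (norm_nonneg _)).mp this

lemma exists_lt_norm_of_ofReal_le_iSup₂_nnnorm {Y E : Type*} [SeminormedAddCommGroup E]
    {K : Set Y} {u : Y → E} {ε ε' : ℝ} (h : ENNReal.ofReal ε ≤ ⨆ y ∈ K, (‖u y‖₊ : ℝ≥0∞))
    (hε : 0 < ε) (hε' : ε' < ε) : ∃ y ∈ K, ε' < ‖u y‖ := by
  obtain ⟨y, hy, hlt⟩ := lt_biSup_iff.mp ((ENNReal.ofReal_lt_ofReal_iff hε).mpr hε' |>.trans_le h)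
  rw [← enorm_eq_nnnorm, ← ofReal_norm] at hlt
  exact ⟨y, hy, (ENNReal.ofReal_lt_ofReal_iff'.mp hlt).1⟩

lemma tendsto_nhds_zero_of_lt_one_div {a : ℕ → ℝ} (h0 : ∀ n, 0 ≤ a n)
    (h : ∀ n, a n < 1 / ((n : ℝ) + 1)) : Tendsto a atTop (𝓝 0) :=
  squeeze_zero h0 (fun n => (h n).le) tendsto_one_div_add_atTop_nhds_zero_nat

/-- `continuous_tsum` needs `E` complete; here the sum is taken in the completion instead, where
each value still has a single nonzero term and hence comes from `E`. -/
lemma continuous_tsum_of_forall_eq_zero_of_ne {ι β E : Type*} [TopologicalSpace β]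
    [NormedAddCommGroup E] {v : ι → β → E} (hv : ∀ k, Continuous (v k)) {b : ι → ℝ}
    (hb : Summable b) (hvb : ∀ k y, ‖v k y‖ ≤ b k) (hsingle : ∀ y, ∃ k₀, ∀ k ≠ k₀, v k y = 0) :
    Continuous fun y => ∑' k, v k y := by
  let ι' : E →+ UniformSpace.Completion E := UniformSpace.Completion.toCompl
  have hι' : Isometry ι' := UniformSpace.Completion.coe_isometry
  have hcomp : (ι' ∘ fun y => ∑' k, v k y) = fun y => ∑' k, ι' (v k y) := by
    ext y
    obtain ⟨k₀, hk₀⟩ := hsingle y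
    exact ((hasSum_single k₀ hk₀).summable.hasSum.map ι' hι'.continuous).tsum_eq.symm
  rw [← hι'.comp_continuous_iff, hcomp]
  exact continuous_tsum (fun k => hι'.continuous.comp (hv k)) hb fun k y => by
    simpa [ι', UniformSpace.Completion.norm_coe] using hvb k y

section Interpolation

variable {X E : Type*} [MetricSpace X] [NormedAddCommGroup E] [NormedSpace ℝ E]

lemma exists_strictMono_lacunary {x : X} {w : ℕ → X} (hw : Tendsto w atTop (𝓝[≠] x)) :
    ∃ σ : ℕ → ℕ, StrictMono σ ∧ (∀ k, w (σ k) ≠ x) ∧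
      ∀ j k, j < k → 2 * dist (w (σ k)) x ≤ dist (w (σ j)) x := by
  obtain ⟨hwx, hne⟩ := tendsto_nhdsWithin_iff.mp hw
  have hd := tendsto_iff_dist_tendsto_zero.mp hwx
  obtain ⟨σ, hσne, hσ⟩ := exists_seq_of_forall_finset_exists (fun n => w n ≠ x)
    (fun m n => m < n ∧ 2 * dist (w n) x ≤ dist (w m) x) fun s hs => by
      have hsmall : ∀ m ∈ s, ∀ᶠ n in atTop, m < n ∧ 2 * dist (w n) x ≤ dist (w m) x :=
        fun m hm => (eventually_gt_atTop m).and <|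
          (hd.eventually (eventually_le_nhds (half_pos (dist_pos.mpr (hs m hm))))).mono
            fun n hn => by linarith
      exact (hne.and ((eventually_all_finset s).mpr hsmall)).exists
  exact ⟨σ, fun j k hjk => (hσ j k hjk).1, hσne, fun j k hjk => (hσ j k hjk).2⟩

/-- The interpolant is `∑ k, ψ k • c k`, where `ψ k` is a bump supported in the ball of radius
`dist (w k) x / 3` around `w k`; lacunarity makes these balls pairwise disjoint. -/
lemma exists_boundedContinuous_interpolation {x : X} {w : ℕ → X} (hwx : ∀ k, w k ≠ x)
    (hw : ∀ j k, j < k → 2 * dist (w k) x ≤ dist (w j) x) {c : ℕ → E}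
    (hc : Summable fun k => ‖c k‖) :
    ∃ u : X →ᵇ E, (∀ k, u (w k) = c k) ∧ u x = 0 := by
  set r : ℕ → ℝ := fun k => dist (w k) x / 3
  have hr : ∀ k, 0 < r k := fun k => by have := dist_pos.mpr (hwx k); positivity
  set ψ : ℕ → X →ᵇ ℝ≥0 := fun k => thickenedIndicator (hr k) {w k}
  have hψ_zero : ∀ k y, r k ≤ dist y (w k) → ψ k y = 0 := fun k y hy =>
    thickenedIndicator_zero _ _ (by simpa [Metric.thickening_singleton] using hy)
  have hψ_self : ∀ k, ψ k (w k) = 1 := fun k => thickenedIndicator_one _ _ rfl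
  have hψ_x : ∀ k, ψ k x = 0 := fun k => hψ_zero k x <| by
    rw [dist_comm]; have := hr k; simp only [r] at this ⊢; linarith
  have hball : ∀ j k y, j < k → dist y (w j) < r j → r k ≤ dist y (w k) := by
    intro j k y hjk hj
    by_contra! hk
    have := dist_triangle_left (w j) (w k) y
    have := dist_triangle (w j) (w k) x
    have := hw j k hjk
    simp only [r] at hj hk
    linarith
  have hψ_disj : ∀ j k y, j ≠ k → ψ j y ≠ 0 → ψ k y = 0 := by
    intro j k y hjk hj
    have hj' : dist y (w j) < r j := lt_of_not_ge fun h => hj (hψ_zero j y h)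
    rcases hjk.lt_or_gt with h | h
    · exact hψ_zero k y (hball j k y h hj')
    · by_contra hk
      exact hj (hψ_zero j y (hball k j y h (lt_of_not_ge fun h' => hk (hψ_zero k y h'))))
  set v : ℕ → X → E := fun k y => (ψ k y : ℝ) • c k
  have hv_le : ∀ k y, ‖v k y‖ ≤ ‖c k‖ := fun k y => by
    simp only [v, norm_smul, NNReal.norm_eq]
    exact mul_le_of_le_one_left (norm_nonneg _) (mod_cast thickenedIndicator_le_one (hr k) _ y)
  have hsingle : ∀ y, ∃ k₀, ∀ k ≠ k₀, v k y = 0 := by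
    intro y
    by_cases h : ∃ k₀, ψ k₀ y ≠ 0
    · obtain ⟨k₀, hk₀⟩ := h
      exact ⟨k₀, fun k hk => by simp [v, hψ_disj k₀ k y hk.symm hk₀]⟩
    · simp only [not_exists, not_not] at h
      exact ⟨0, fun k _ => by simp [v, h k]⟩
  have hu_le : ∀ y, ‖∑' k, v k y‖ ≤ ∑' k, ‖c k‖ := fun y => by
    obtain ⟨k₀, hk₀⟩ := hsingle y
    rw [tsum_eq_single k₀ hk₀]
    exact (hv_le k₀ y).trans (hc.le_tsum k₀ fun _ _ => norm_nonneg _)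
  refine ⟨.ofNormedAddCommGroup (fun y => ∑' k, v k y)
      (continuous_tsum_of_forall_eq_zero_of_ne (fun k => (NNReal.continuous_coe.comp
        (ψ k).continuous).smul continuous_const) hc hv_le hsingle) _ hu_le, fun j => ?_, ?_⟩
  · change ∑' k, v k (w j) = c j
    rw [tsum_eq_single j fun k hk => by simp [v, hψ_disj j k (w j) hk.symm (by simp [hψ_self])]]
    simp [v, hψ_self]
  · change ∑' k, v k x = 0
    refine (tsum_congr fun k => ?_).trans tsum_zero
    simp [v, hψ_x]

end Interpolation

section Superposition

variable {X E F : Type*} [MetricSpace X] [NormedAddCommGroup E] [NormedSpace ℝ E]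
  {Ψ : X → E → F} {f : X → E} {x : X}

/-- A bounded continuous `u` with `u (w (σ k)) = c (σ k)` and `u x = 0` turns the
perturbations by `c` into evaluations of the single continuous map `y ↦ Ψ y (f y + u y)`. -/
lemma exists_subseq_tendsto_apply_add [TopologicalSpace F]
    (hΨ : ∀ u : X →ᵇ E, ContinuousAt (fun y => Ψ y (f y + u y)) x)
    {w : ℕ → X} (hw : Tendsto w atTop (𝓝[≠] x)) {c : ℕ → E} (hc : Tendsto c atTop (𝓝 0)) :
    ∃ σ : ℕ → ℕ,
      Tendsto (fun k => Ψ (w (σ k)) (f (w (σ k)) + c (σ k))) atTop (𝓝 (Ψ x (f x))) := by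
  obtain ⟨σ₁, hσ₁, hcσ₁⟩ := extraction_forall_of_eventually fun k =>
    (tendsto_zero_iff_norm_tendsto_zero.mp hc).eventually
      (eventually_le_nhds (pow_pos (one_half_pos (α := ℝ)) k))
  obtain ⟨σ₂, hσ₂, hwx, hlac⟩ := exists_strictMono_lacunary (hw.comp hσ₁.tendsto_atTop)
  have hsum : Summable fun k => ‖c (σ₁ (σ₂ k))‖ :=
    (summable_geometric_two.of_nonneg_of_le (fun _ => norm_nonneg _) hcσ₁).comp_injective
      hσ₂.injective
  obtain ⟨u, hu, hux⟩ := exists_boundedContinuous_interpolation hwx hlac hsum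
  have hu' : ∀ k, u (w (σ₁ (σ₂ k))) = c (σ₁ (σ₂ k)) := hu
  refine ⟨σ₁ ∘ σ₂, ?_⟩
  have := (hΨ u).tendsto.comp
    ((tendsto_nhdsWithin_iff.mp hw).1.comp (hσ₁.comp hσ₂).tendsto_atTop)
  simpa [Function.comp_def, hu', hux] using this

lemma tendsto_apply_add_of_tendsto_nhdsNE [TopologicalSpace F]
    (hΨ : ∀ u : X →ᵇ E, ContinuousAt (fun y => Ψ y (f y + u y)) x)
    {w : ℕ → X} (hw : Tendsto w atTop (𝓝[≠] x)) {c : ℕ → E} (hc : Tendsto c atTop (𝓝 0)) :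
    Tendsto (fun n => Ψ (w n) (f (w n) + c n)) atTop (𝓝 (Ψ x (f x))) :=
  tendsto_of_subseq_tendsto fun _ hns =>
    exists_subseq_tendsto_apply_add hΨ (hw.comp hns) (hc.comp hns)

/-- Each `x' n` is replaced by a point `z n ≠ x` at which `Ψ · (f · + c n)` takes almost the same
value; such points exist because `x` is not isolated. -/
theorem tendsto_apply_add_of_tendsto [PseudoMetricSpace F] [(𝓝[≠] x).NeBot]
    (hΨ : ∀ u : X →ᵇ E, Continuous fun y => Ψ y (f y + u y))
    {x' : ℕ → X} (hx' : Tendsto x' atTop (𝓝 x)) {c : ℕ → E} (hc : Tendsto c atTop (𝓝 0)) :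
    Tendsto (fun n => Ψ (x' n) (f (x' n) + c n)) atTop (𝓝 (Ψ x (f x))) := by
  have hz : ∀ n : ℕ, ∃ z, (dist (x' n) z < 1 / ((n : ℝ) + 1) ∧
      dist (Ψ z (f z + c n)) (Ψ (x' n) (f (x' n) + c n)) < 1 / ((n : ℝ) + 1)) ∧ z ≠ x := by
    intro n
    have hpos : (0 : ℝ) < 1 / ((n : ℝ) + 1) := Nat.one_div_pos_of_nat
    have hball : ∀ᶠ z in 𝓝 (x' n), dist z (x' n) < 1 / ((n : ℝ) + 1) :=
      Metric.ball_mem_nhds _ hpos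
    have hnear := hball.and
      ((hΨ (.const X (c n))).continuousAt.eventually (Metric.ball_mem_nhds _ hpos))
    have hne : ∃ᶠ z in 𝓝 (x' n), z ≠ x := by
      by_cases hxn : x' n = x
      · rw [hxn]; exact frequently_iff_neBot.mpr ‹_›
      · exact (eventually_ne_nhds hxn).frequently
    obtain ⟨z, ⟨hz₁, hz₂⟩, hz₃⟩ := (hnear.and_frequently hne).exists
    exact ⟨z, ⟨by simpa [dist_comm] using hz₁, hz₂⟩, hz₃⟩
  choose z hz_near hz_ne using hz
  have hzx : Tendsto z atTop (𝓝[≠] x) := tendsto_nhdsWithin_iff.mpr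
    ⟨hx'.congr_dist <| tendsto_nhds_zero_of_lt_one_div (fun _ => dist_nonneg) fun n =>
      (hz_near n).1, .of_forall hz_ne⟩
  exact (tendsto_apply_add_of_tendsto_nhdsNE (fun u => (hΨ u).continuousAt) hzx hc).congr_dist
    (tendsto_nhds_zero_of_lt_one_div (fun _ => dist_nonneg) fun n => (hz_near n).2)

end Superposition

theorem stmt10 {X Y E F : Type*} [MetricSpace X] [MetricSpace Y]
    [NormedAddCommGroup E] [NormedSpace ℝ E]
    [NormedAddCommGroup F]
    (A : Set (X → E)) (hA : A = Cset X E ∨ A = CbSet X E)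
    (B : Set (Y → F)) (hB : B = Cset Y F ∨ B = CbSet Y F)
    (T : A → B)
    (φ : X ≃ₜ Y) (Φ : Y × E → F)
    (hrep : ∀ (f : A) (y : Y), (T f : Y → F) y = Φ (y, (f : X → E) (φ.symm y))) :
    ∀ K : Set Y, K ⊆ accPts Y → IsCompact K → ∀ f : A, ∀ ε : ℝ, 0 < ε →
      ∃ δ : ℝ, 0 < δ ∧ ∀ g : A,
        (⨆ y ∈ K, (‖(g : X → E) (φ.symm y) - (f : X → E) (φ.symm y)‖₊ : ℝ≥0∞))
            < ENNReal.ofReal δ →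
        (⨆ y ∈ K, (‖(T g : Y → F) y - (T f : Y → F) y‖₊ : ℝ≥0∞)) < ENNReal.ofReal ε := by
  intro K hKacc hK f ε hε
  by_contra! hcon
  choose g hg_near hg_far using fun n : ℕ => hcon (1 / ((n : ℝ) + 1)) Nat.one_div_pos_of_nat
  choose y hyK hy_far using fun n =>
    exists_lt_norm_of_ofReal_le_iSup₂_nnnorm (hg_far n) hε (half_lt_self hε)
  set c : ℕ → E := fun n => (g n : X → E) (φ.symm (y n)) - (f : X → E) (φ.symm (y n))
  have hc : Tendsto c atTop (𝓝 0) := tendsto_zero_iff_norm_tendsto_zero.mpr <|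
    tendsto_nhds_zero_of_lt_one_div (fun _ => norm_nonneg _) fun n =>
      norm_lt_of_iSup₂_nnnorm_lt_ofReal (hg_near n) (hyK n)
  obtain ⟨y₀, hy₀K, σ, hσ, hyσ⟩ := hK.tendsto_subseq hyK
  have : (𝓝[≠] (φ.symm y₀)).NeBot := by
    rw [← φ.symm.map_punctured_nhds_eq]
    exact @Filter.map_neBot _ _ _ _ ⟨hKacc hy₀K⟩
  have hΨ (u : X →ᵇ E) : Continuous fun x => Φ (φ x, (f : X → E) x + u x) := by
    convert (continuous_of_mem hB (T ⟨_, add_boundedContinuous_mem hA f.2 u⟩).2).comp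
      φ.continuous using 1
    ext x
    simp [hrep]
  have hlim := tendsto_apply_add_of_tendsto (Ψ := fun x e => Φ (φ x, e)) hΨ
    (φ.symm.continuous.tendsto y₀ |>.comp hyσ) (hc.comp hσ.tendsto_atTop)
  have hTg (n : ℕ) : (T (g n) : Y → F) (y n) = Φ (y n, (f : X → E) (φ.symm (y n)) + c n) := by
    simp [hrep, c]
  have hTf := (continuous_of_mem hB (T f).2).tendsto y₀ |>.comp hyσ
  simp only [Function.comp_def, φ.apply_symm_apply, ← hTg, ← hrep] at hlim hTf
  obtain ⟨n, hn⟩ := ((hlim.sub hTf).norm.eventually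
    (eventually_lt_nhds (b := ε / 2) (by simpa using half_pos hε))).exists
  exact (hy_far (σ n)).not_gt hn

end Stmt10
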